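/- For j, n, m ≥ 3 with (n+m-4) not divisible by (j-1), the size Ramsey multipartite number equals m_j(S_n, S_m) = ⌈(n+m-4)/(j-1)⌉ = ⌈(n+m-3)/(j-1)⌉. -/

import Mathlib

/-- The complete balanced multipartite graph `K_{j×s}` on `Fin j × Fin s`:
vertices are adjacent iff they lie in different parts (different first coordinate). -/
def multiK (j s : ℕ) : SimpleGraph (Fin j × Fin s) where
  Adj u v := u.1 ≠ v.1
  symm := ⟨fun _ _ h => h.symm⟩
  loopless := ⟨fun _ h => h rfl⟩

/-- Degree of a vertex, via `Set.ncard` of its neighbor set. -/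
noncomputable def mdeg {V : Type*} (G : SimpleGraph V) (v : V) : ℕ :=
  (G.neighborSet v).ncard

/-- `K_{j×s} → (S_n, S_m)`: every red/blue edge coloring (red subgraph `R ≤ K_{j×s}`,
blue the rest) contains a red `K_{1,n-1}` or a blue `K_{1,m-1}`. -/
def Arrows (j s n m : ℕ) : Prop :=
  ∀ R : SimpleGraph (Fin j × Fin s), R ≤ multiK j s →
    (∃ v, n - 1 ≤ mdeg R v) ∨ (∃ v, m - 1 ≤ mdeg (multiK j s \ R) v)

/-- The size Ramsey multipartite number `m_j(S_n, S_m)`. -/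
noncomputable def mj (j n m : ℕ) : ℕ := sInf {s | Arrows j s n m}

/-!
At every vertex of `K_{j×s}` the red and the blue degree add up to `(j - 1) * s`, so once
`(j - 1) * s ≥ n + m - 3` one of them reaches `n - 1` or `m - 1`. If `(j - 1) * s < n + m - 4`,
some even `e` satisfies `(j - 1) * s - (m - 2) ≤ e ≤ n - 2`; colouring red the Cayley graph of
`Fin j × Fin s` on a negation-closed set of `e` elements with nonzero first coordinate gives an
`e`-regular red graph with neither star. As `j - 1 ∤ n + m - 4`, the two thresholds have the same
ceiling quotient.
-/

open Finset

section NegClosed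

variable {α : Type*} [InvolutiveNeg α] [DecidableEq α]

lemma Finset.exists_neg_closed_subset_card_eq_two {S : Finset α} (hS : ∀ x ∈ S, -x ∈ S)
    (h2 : 2 ≤ #S) : ∃ T ⊆ S, (∀ x ∈ T, -x ∈ T) ∧ #T = 2 := by
  by_cases hmoved : ∃ x ∈ S, -x ≠ x
  · obtain ⟨x, hx, hnx⟩ := hmoved
    refine ⟨{x, -x}, by simp [insert_subset_iff, hx, hS x hx], ?_, card_pair hnx.symm⟩
    simp [or_comm]
  · simp only [not_exists, not_and, not_not] at hmoved
    obtain ⟨x, hx, y, hy, hxy⟩ := one_lt_card.mp h2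
    refine ⟨{x, y}, by simp [insert_subset_iff, hx, hy], ?_, card_pair hxy⟩
    simp [hmoved x hx, hmoved y hy]

lemma Finset.exists_neg_closed_subset_card_eq {S : Finset α} (hS : ∀ x ∈ S, -x ∈ S)
    {e : ℕ} (he : Even e) (hle : e ≤ #S) : ∃ T ⊆ S, (∀ x ∈ T, -x ∈ T) ∧ #T = e := by
  obtain ⟨k, rfl⟩ := he
  induction k with
  | zero => exact ⟨∅, empty_subset _, by simp, rfl⟩
  | succ k ih =>
    obtain ⟨T, hTS, hT, hTcard⟩ := ih (by omega)
    have hST : ∀ x ∈ S \ T, -x ∈ S \ T := fun x hx => by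
      rw [mem_sdiff] at hx ⊢
      exact ⟨hS x hx.1, fun h => hx.2 (neg_neg x ▸ hT _ h)⟩
    obtain ⟨U, hUST, hU, hUcard⟩ :=
      exists_neg_closed_subset_card_eq_two hST (by rw [card_sdiff_of_subset hTS]; omega)
    have hdisj : Disjoint T U := disjoint_of_subset_right hUST disjoint_sdiff
    refine ⟨T ∪ U, union_subset hTS (hUST.trans sdiff_subset), ?_, ?_⟩
    · simp only [mem_union]
      rintro x (hx | hx)
      exacts [Or.inl (hT x hx), Or.inr (hU x hx)]
    · rw [card_union_of_disjoint hdisj]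
      omega

end NegClosed

section Graph

variable {V : Type*}

lemma mdeg_add_mdeg_sdiff [Finite V] {G R : SimpleGraph V} (h : R ≤ G) (v : V) :
    mdeg R v + mdeg (G \ R) v = mdeg G v := by
  rw [mdeg, mdeg, mdeg, SimpleGraph.neighborSet_sdiff, add_comm]
  exact Set.ncard_sdiff_add_ncard_of_subset fun w hw => h hw

lemma mdeg_addCayley [AddGroup V] {T : Set V} (hT : ∀ x ∈ T, -x ∈ T) (h0 : (0 : V) ∉ T)
    (v : V) : mdeg (SimpleGraph.addCayley T) v = T.ncard := by
  have : (SimpleGraph.addCayley T).neighborSet v = (v + ·) '' T := by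
    ext w
    simp only [SimpleGraph.mem_neighborSet, SimpleGraph.addCayley_adj, Set.mem_image]
    constructor
    · rintro ⟨-, h | h⟩
      · exact ⟨-v + w, h, add_neg_cancel_left v w⟩
      · exact ⟨-v + w, by simpa using hT _ h, add_neg_cancel_left v w⟩
    · rintro ⟨x, hx, rfl⟩
      refine ⟨fun h => h0 ?_, Or.inl (by simpa using hx)⟩
      rwa [left_eq_add.mp h] at hx
  rw [mdeg, this, Set.ncard_image_of_injective _ (add_right_injective v)]

end Graph

lemma neighborSet_multiK (j s : ℕ) (v : Fin j × Fin s) :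
    (multiK j s).neighborSet v = ↑((univ.erase v.1) ×ˢ (univ : Finset (Fin s))) := by
  ext w
  simp [multiK, ne_comm]

lemma mdeg_multiK (j s : ℕ) (v : Fin j × Fin s) : mdeg (multiK j s) v = (j - 1) * s := by
  rw [mdeg, neighborSet_multiK, Set.ncard_coe_finset, card_product, card_erase_of_mem (mem_univ _),
    card_univ, card_univ, Fintype.card_fin, Fintype.card_fin]

lemma exists_regular_le_multiK {j s e : ℕ} (he : Even e) (hle : e ≤ (j - 1) * s) :
    ∃ R ≤ multiK j s, ∀ v, mdeg R v = e := by
  rcases Nat.eq_zero_or_pos e with rfl | hepos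
  · exact ⟨⊥, bot_le, fun v => by simp [mdeg]⟩
  obtain ⟨hj, hs⟩ := CanonicallyOrderedAdd.mul_pos.mp (hepos.trans_le hle)
  have : NeZero j := ⟨by omega⟩
  have : NeZero s := ⟨hs.ne'⟩
  set S : Finset (Fin j × Fin s) := (univ.erase 0) ×ˢ univ
  have hS : ∀ x ∈ S, -x ∈ S := by simp [S]
  have hScard : #S = (j - 1) * s := by simp [S, card_erase_of_mem]
  obtain ⟨T, hTS, hT, rfl⟩ := exists_neg_closed_subset_card_eq hS he (hScard ▸ hle)
  refine ⟨SimpleGraph.addCayley (T : Set _), ?_, fun v => ?_⟩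
  · rw [SimpleGraph.addCayley_le_iff]
    intro g hg a _
    have hg0 : g.1 ≠ 0 := by simpa [S] using hTS hg
    show (a + g).1 ≠ a.1
    simpa using hg0
  · rw [mdeg_addCayley (by simpa using hT) (fun h0 => by simpa [S] using hTS h0),
      Set.ncard_coe_finset]

lemma Nat.add_one_ceilDiv_of_not_dvd {a q : ℕ} (hq : 0 < q) (h : ¬ q ∣ a) :
    (a + 1) ⌈/⌉ q = a ⌈/⌉ q := by
  have hle : a ≤ q * (a ⌈/⌉ q) := (ceilDiv_le_iff_le_mul hq).mp le_rfl
  have hne : a ≠ q * (a ⌈/⌉ q) := fun heq => h (heq ▸ dvd_mul_right _ _)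
  have hle' : a + 1 ≤ q * ((a + 1) ⌈/⌉ q) := (ceilDiv_le_iff_le_mul hq).mp le_rfl
  exact le_antisymm ((ceilDiv_le_iff_le_mul hq).mpr (by omega))
    ((ceilDiv_le_iff_le_mul hq).mpr (by omega))

lemma arrows_of_le {j s n m : ℕ} (hn : 2 ≤ n) (hm : 2 ≤ m) (h : n + m - 3 ≤ (j - 1) * s) :
    Arrows j s n m := by
  obtain ⟨hj, hs⟩ := CanonicallyOrderedAdd.mul_pos.mp (show 0 < (j - 1) * s by omega)
  intro R hR
  by_contra! hnone
  let v : Fin j × Fin s := (⟨0, by omega⟩, ⟨0, hs⟩)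
  have hsplit := mdeg_add_mdeg_sdiff hR v
  rw [mdeg_multiK] at hsplit
  have := hnone.1 v
  have := hnone.2 v
  omega

lemma not_arrows_of_lt {j s n m : ℕ} (hn : 2 ≤ n) (hm : 3 ≤ m) (h : (j - 1) * s < n + m - 4) :
    ¬ Arrows j s n m := by
  obtain ⟨e, he, hle, hred, hblue⟩ :
      ∃ e, Even e ∧ e ≤ (j - 1) * s ∧ e < n - 1 ∧ (j - 1) * s < e + (m - 1) := by
    rcases Nat.even_or_odd ((j - 1) * s + 2 - m) with hev | hodd
    · exact ⟨_, hev, by omega, by omega, by omega⟩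
    · obtain ⟨k, hk⟩ := hodd
      exact ⟨2 * k + 2, ⟨k + 1, by omega⟩, by omega, by omega, by omega⟩
  obtain ⟨R, hR, hreg⟩ := exists_regular_le_multiK he hle
  intro harrows
  rcases harrows R hR with ⟨v, hv⟩ | ⟨v, hv⟩
  · rw [hreg] at hv
    omega
  · have hsplit := mdeg_add_mdeg_sdiff hR v
    rw [hreg, mdeg_multiK] at hsplit
    omega

theorem stmt12 (j n m : ℕ) (hj : 3 ≤ j) (hn : 3 ≤ n) (hm : 3 ≤ m)
    (hdvd : ¬ (j - 1) ∣ (n + m - 4)) :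
    mj j n m = (n + m - 4) ⌈/⌉ (j - 1) ∧
      (n + m - 4) ⌈/⌉ (j - 1) = (n + m - 3) ⌈/⌉ (j - 1) := by
  have hq : 0 < j - 1 := by omega
  have hceil : (n + m - 4) ⌈/⌉ (j - 1) = (n + m - 3) ⌈/⌉ (j - 1) := by
    rw [show n + m - 3 = n + m - 4 + 1 by omega, Nat.add_one_ceilDiv_of_not_dvd hq hdvd]
  refine ⟨IsLeast.csInf_eq ⟨?_, fun s hs => ?_⟩, hceil⟩
  · exact arrows_of_le (by omega) (by omega) ((ceilDiv_le_iff_le_mul hq).mp hceil.ge)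
  · by_contra hlt
    refine not_arrows_of_lt (by omega) hm (lt_of_not_ge fun hle => hlt ?_) hs
    exact (ceilDiv_le_iff_le_mul hq).mpr hle
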